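/- Let (X₁, X₂) be a pair of non-identically distributed log-normal random variables with X_i ~ LN(μ_i, σ_i²), i = 1, 2, let S⁻ be their counter-monotonic sum and φ⁻(u) = F_{X₁}^{-1}(u) + F_{X₂}^{-1}(1 − u) the aggregate loss function. Then for every p ∈ (0,1), the set E = {u ∈ (0,1) : φ⁻(u) = F_{S⁻}^{-1}(p)} has exactly two elements u_{p,1} < u_{p,2}, and for each j = 1, 2, VaR_p[S⁻] = VaR_{u_{p,j}}[X₁] + VaR_{1 − u_{p,j}}[X₂]. -/

import Mathlib

open MeasureTheory ProbabilityTheory Set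

noncomputable section

variable {Ω : Type*} [MeasurableSpace Ω]

/-- The cumulative distribution function of the random variable `X` under `P`. -/
def rvCdf (P : Measure Ω) (X : Ω → ℝ) : ℝ → ℝ := fun x => (P {ω | X ω ≤ x}).toReal

/-- The survival function `x ↦ P(X > x)`. -/
def rvSurv (P : Measure Ω) (X : Ω → ℝ) : ℝ → ℝ := fun x => (P {ω | x < X ω}).toReal

/-- The left inverse `F⁻¹(p) = inf {x | F x ≥ p}` of a cdf `F`. -/
def leftInv (F : ℝ → ℝ) (p : ℝ) : ℝ := sInf {x | p ≤ F x}

/-- The right inverse `F⁻¹⁺(p) = sup {x | F x ≤ p}` of a cdf `F`. -/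
def rightInv (F : ℝ → ℝ) (p : ℝ) : ℝ := sSup {x | F x ≤ p}

/-- `g : [0,1] → [0,1]` is a distortion function: nondecreasing with `g 0 = 0`, `g 1 = 1`. -/
def IsDistortion (g : ℝ → ℝ) : Prop :=
  MonotoneOn g (Icc 0 1) ∧ g 0 = 0 ∧ g 1 = 1 ∧ ∀ q ∈ Icc (0:ℝ) 1, g q ∈ Icc (0:ℝ) 1

/-- The dual distortion function `ḡ(q) = 1 - g(1 - q)`. -/
def dualDistortion (g : ℝ → ℝ) : ℝ → ℝ := fun q => 1 - g (1 - q)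

/-- The distortion risk measure
`ρ_g[X] = -∫_{-∞}^0 (1 - g(P(X > x))) dx + ∫_0^∞ g(P(X > x)) dx`. -/
def rho (P : Measure Ω) (g : ℝ → ℝ) (X : Ω → ℝ) : ℝ :=
  (- ∫ x in Iio (0:ℝ), (1 - g (rvSurv P X x))) + ∫ x in Ioi (0:ℝ), g (rvSurv P X x)

/-- The two integrals defining the distortion risk measure `ρ_g[X]` are finite. -/
def RhoFinite (P : Measure Ω) (g : ℝ → ℝ) (X : Ω → ℝ) : Prop :=
  IntegrableOn (fun x => 1 - g (rvSurv P X x)) (Iio (0:ℝ)) volume ∧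
  IntegrableOn (fun x => g (rvSurv P X x)) (Ioi (0:ℝ)) volume

/-- `U` is uniformly distributed on `[0,1]`. -/
def IsUniform01 (P : Measure Ω) (U : Ω → ℝ) : Prop :=
  Measurable U ∧ Measure.map U P = volume.restrict (Icc (0:ℝ) 1)

/-- The counter-monotonic sum `S⁻ = F_{X₁}⁻¹(U) + F_{X₂}⁻¹(1 - U)`. -/
def cmSum (P : Measure Ω) (X₁ X₂ : Ω → ℝ) (U : Ω → ℝ) : Ω → ℝ :=
  fun ω => leftInv (rvCdf P X₁) (U ω) + leftInv (rvCdf P X₂) (1 - U ω)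

/-- `X` is symmetric: for some `m`, `P(X ≤ m - x) = P(X ≥ m + x)` for all `x`. -/
def IsSymmetricRV (P : Measure Ω) (X : Ω → ℝ) : Prop :=
  ∃ m : ℝ, ∀ x : ℝ, P {ω | X ω ≤ m - x} = P {ω | m + x ≤ X ω}

/-- Dispersive order `X ≤_disp Y`. -/
def DispLE (P : Measure Ω) (X Y : Ω → ℝ) : Prop :=
  ∀ u v : ℝ, 0 < v → v ≤ u → u < 1 →
    leftInv (rvCdf P X) u - leftInv (rvCdf P X) v ≤
      leftInv (rvCdf P Y) u - leftInv (rvCdf P Y) v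

/-- The cdf of `X` is continuous and strictly increasing on `(F⁻¹⁺(0), F⁻¹(1))`. -/
def CdfRegular (P : Measure Ω) (X : Ω → ℝ) : Prop :=
  ContinuousOn (rvCdf P X) (Ioo (rightInv (rvCdf P X) 0) (leftInv (rvCdf P X) 1)) ∧
  StrictMonoOn (rvCdf P X) (Ioo (rightInv (rvCdf P X) 0) (leftInv (rvCdf P X) 1))

/-- Value-at-Risk `VaR_p[X] = F_X⁻¹(p)`. -/
def VaR (P : Measure Ω) (X : Ω → ℝ) (p : ℝ) : ℝ := leftInv (rvCdf P X) p

/-- Tail-Value-at-Risk `TVaR_p[X] = (1/(1-p)) ∫_p^1 F_X⁻¹(q) dq`. -/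
def TVaR (P : Measure Ω) (X : Ω → ℝ) (p : ℝ) : ℝ :=
  (1 - p)⁻¹ * ∫ q in p..1, leftInv (rvCdf P X) q

/-- Left-Tail-Value-at-Risk `LTVaR_p[X] = (1/p) ∫_0^p F_X⁻¹(q) dq`. -/
def LTVaR (P : Measure Ω) (X : Ω → ℝ) (p : ℝ) : ℝ :=
  p⁻¹ * ∫ q in (0:ℝ)..p, leftInv (rvCdf P X) q

/-- The standard normal cdf `Φ`. -/
def stdNormCdf : ℝ → ℝ := fun x => ((gaussianReal 0 1) (Iic x)).toReal

/-- The inverse `Φ⁻¹` of the standard normal cdf. -/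
def stdNormInv : ℝ → ℝ := fun p => sInf {x | p ≤ stdNormCdf x}

/-- The Wang transform distortion function at level `p`. -/
def wangG (p : ℝ) : ℝ → ℝ := fun q => stdNormCdf (stdNormInv q + stdNormInv p)

/-- The Wang transform risk measure at level `p`. -/
def WT (P : Measure Ω) (X : Ω → ℝ) (p : ℝ) : ℝ := rho P (wangG p) X

/-- `X ~ N(μ, σ²)`. -/
def IsNormalRV (P : Measure Ω) (X : Ω → ℝ) (μ σ : ℝ) : Prop :=
  Measurable X ∧ Measure.map X P = gaussianReal μ (⟨σ ^ 2, sq_nonneg σ⟩ : NNReal)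

/-- `X ~ LN(μ, σ²)`, i.e. `X` is distributed as `exp Z` with `Z ~ N(μ, σ²)`. -/
def IsLogNormalRV (P : Measure Ω) (X : Ω → ℝ) (μ σ : ℝ) : Prop :=
  Measurable X ∧
    Measure.map X P = Measure.map Real.exp (gaussianReal μ (⟨σ ^ 2, sq_nonneg σ⟩ : NNReal))

/-- `X ~ Student(ν)`: density proportional to `(1 + x²/ν)^(-(ν+1)/2)`. -/
def IsStudentRV (P : Measure Ω) (X : Ω → ℝ) (ν : ℝ) : Prop :=
  Measurable X ∧ ∃ c : ℝ, 0 < c ∧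
    Measure.map X P =
      volume.withDensity (fun x => ENNReal.ofReal (c * (1 + x ^ 2 / ν) ^ (-((ν + 1) / 2))))

/-- Extension of a distortion function to `ℝ` by constants. -/
def gExt (g : ℝ → ℝ) : ℝ → ℝ := fun q => if q ≤ 0 then 0 else if 1 ≤ q then 1 else g q

open Classical in
/-- The Lebesgue–Stieltjes measure `dg` associated with (the right-continuous modification of)
the extension of a distortion function `g` to `ℝ`. -/
def lsMeasure (g : ℝ → ℝ) : Measure ℝ :=
  if h : Monotone (gExt g) then h.stieltjesFunction.measure else 0

/-!
In Gaussian coordinates `u = Φ t` the aggregate loss is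
`φ⁻(Φ t) = exp (μ₁ + σ₁ t) + exp (μ₂ - σ₂ t)`, using `1 - Φ t = Φ (-t)`. This is strictly convex
and tends to `+∞` in both directions, so it has a unique minimiser `c` and takes every value
above its minimum exactly twice. Since `S⁻ = φ⁻(U)` and `U ∈ (0, 1)` almost surely, `S⁻` exceeds
`φ⁻(Φ c)` almost surely, so its cdf vanishes there; right-continuity of the cdf then puts
`VaR_p[S⁻]` strictly above the minimum. The level set is therefore the image under `Φ` of the two
roots, and each of its points `u` satisfies `φ⁻(u) = VaR_p[S⁻]`, which is the decomposition.
-/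

open Filter Topology

namespace ProbabilityTheory

lemma continuous_cdf (μ : Measure ℝ) [IsProbabilityMeasure μ] [NullSingletonClass μ] :
    Continuous (cdf μ) := by
  refine continuous_iff_continuousAt.2 fun x => ?_
  have hleft : Function.leftLim (cdf μ) x = cdf μ x := by
    have hatom := (cdf μ).measure_singleton x
    rw [measure_cdf, measure_singleton, eq_comm, ENNReal.ofReal_eq_zero] at hatom
    exact le_antisymm ((monotone_cdf μ).leftLim_le le_rfl) (by linarith)
  exact continuousAt_iff_continuous_left'_right'.2
    ⟨(monotone_cdf μ).continuousWithinAt_Iio_iff_leftLim_eq.2 hleft,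
      ((cdf μ).right_continuous x).mono Ioi_subset_Ici_self⟩

lemma strictMono_cdf_of_absolutelyContinuous (μ : Measure ℝ) [IsProbabilityMeasure μ]
    (hμ : volume ≪ μ) : StrictMono (cdf μ) := by
  refine fun a b hab => (monotone_cdf μ hab.le).lt_of_ne fun heq => ?_
  have hnull : μ (Ioc a b) = 0 := by
    rw [← measure_cdf μ, StieltjesFunction.measure_Ioc, heq, sub_self, ENNReal.ofReal_zero]
  exact (Real.volume_Ioc ▸ hμ hnull : ENNReal.ofReal (b - a) = 0).not_gt
    (ENNReal.ofReal_pos.2 (sub_pos.2 hab))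

lemma le_cdf_leftInv (μ : Measure ℝ) [IsProbabilityMeasure μ] {p : ℝ} (hp : p < 1) :
    p ≤ cdf μ (leftInv (cdf μ) p) := by
  obtain ⟨x, hx⟩ := ((tendsto_cdf_atTop μ).eventually_const_lt hp).exists
  have hright : ∀ z ∈ Ioi (leftInv (cdf μ) p), p ≤ cdf μ z := fun z hz => by
    obtain ⟨t, ht, htz⟩ := exists_lt_of_csInf_lt ⟨x, hx.le⟩ hz
    exact ht.trans (monotone_cdf μ htz.le)
  exact ge_of_tendsto (((cdf μ).right_continuous _).mono Ioi_subset_Ici_self)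
    (eventually_nhdsWithin_of_forall hright)

end ProbabilityTheory

lemma leftInv_eq_of_forall_le_iff {F : ℝ → ℝ} {p a : ℝ} (h : ∀ x, p ≤ F x ↔ a ≤ x) :
    leftInv F p = a := by
  rw [leftInv, show {x | p ≤ F x} = Ici a from ext h, csInf_Ici]

lemma leftInv_of_nonpos {F : ℝ → ℝ} (hF : ∀ x, 0 ≤ F x) {p : ℝ} (hp : p ≤ 0) :
    leftInv F p = 0 := by
  rw [leftInv, show {x | p ≤ F x} = univ from eq_univ_of_forall fun x => hp.trans (hF x),
    Real.sInf_univ]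

lemma leftInv_of_one_le {F : ℝ → ℝ} (hF : ∀ x, F x < 1) {p : ℝ} (hp : 1 ≤ p) :
    leftInv F p = 0 := by
  rw [leftInv, show {x | p ≤ F x} = ∅ from
    eq_empty_of_forall_notMem fun x hx => (hF x).not_ge (hp.trans hx), Real.sInf_empty]

lemma lt_leftInv_rvCdf_of_rvCdf_eq_zero {P : Measure Ω} [IsProbabilityMeasure P] {S : Ω → ℝ}
    (hS : Measurable S) {a p : ℝ} (ha : rvCdf P S a = 0) (hp : p ∈ Ioo 0 1) :
    a < leftInv (rvCdf P S) p := by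
  have := Measure.isProbabilityMeasure_map (μ := P) hS.aemeasurable
  have hcdf : rvCdf P S = cdf (P.map S) := funext fun x => by
    rw [cdf_eq_real, measureReal_def, Measure.map_apply hS measurableSet_Iic]
    rfl
  rw [hcdf] at ha ⊢
  by_contra! hle
  linarith [(le_cdf_leftInv _ hp.2).trans (monotone_cdf _ hle), hp.1]

lemma stdNormCdf_eq_cdf : stdNormCdf = cdf (gaussianReal 0 1) :=
  funext fun x => (cdf_eq_real _ x).symm

lemma continuous_stdNormCdf : Continuous stdNormCdf := by
  have := nullSingletonClass_gaussianReal (μ := 0) one_ne_zero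
  exact stdNormCdf_eq_cdf ▸ continuous_cdf _

lemma strictMono_stdNormCdf : StrictMono stdNormCdf :=
  stdNormCdf_eq_cdf ▸ strictMono_cdf_of_absolutelyContinuous _
    (gaussianReal_absolutelyContinuous' 0 one_ne_zero)

lemma stdNormCdf_neg (x : ℝ) : stdNormCdf (-x) = 1 - stdNormCdf x := by
  have := nullSingletonClass_gaussianReal (μ := 0) one_ne_zero
  have hsymm : gaussianReal 0 1 (Iic (-x)) = gaussianReal 0 1 (Ioi x) := by
    conv_lhs => rw [← neg_zero, ← gaussianReal_map_neg]
    rw [Measure.map_apply measurable_neg measurableSet_Iic, neg_preimage, neg_Iic, neg_neg,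
      measure_congr Ioi_ae_eq_Ici.symm]
  rw [stdNormCdf, stdNormCdf, hsymm, ← compl_Iic, prob_compl_eq_one_sub measurableSet_Iic,
    ENNReal.toReal_sub_of_le prob_le_one ENNReal.one_ne_top, ENNReal.toReal_one]

lemma range_stdNormCdf : range stdNormCdf = Ioo 0 1 := by
  refine Subset.antisymm ?_ fun u hu => ?_
  · rintro _ ⟨x, rfl⟩
    have hle : ∀ y, stdNormCdf y ∈ Icc 0 1 := fun y =>
      ⟨stdNormCdf_eq_cdf ▸ cdf_nonneg _ y, stdNormCdf_eq_cdf ▸ cdf_le_one _ y⟩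
    exact ⟨(hle (x - 1)).1.trans_lt (strictMono_stdNormCdf (sub_one_lt x)),
      (strictMono_stdNormCdf (lt_add_one x)).trans_le (hle (x + 1)).2⟩
  · have hcont := continuous_stdNormCdf
    rw [stdNormCdf_eq_cdf] at hcont ⊢
    exact mem_range_of_exists_le_of_exists_ge hcont
      ((tendsto_cdf_atBot _).eventually_le_const hu.1).exists
      ((tendsto_cdf_atTop _).eventually_const_le hu.2).exists

lemma stdNormCdf_mem_Ioo (x : ℝ) : stdNormCdf x ∈ Ioo 0 1 :=
  range_stdNormCdf ▸ mem_range_self x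

lemma gaussianReal_eq_map_const_add_mul (μ σ : ℝ) :
    gaussianReal μ ⟨σ ^ 2, sq_nonneg σ⟩ = (gaussianReal 0 1).map (fun t => μ + σ * t) := by
  rw [show (fun t => μ + σ * t) = (μ + ·) ∘ (σ * ·) from rfl,
    ← Measure.map_map (measurable_const_add μ) (measurable_const_mul σ),
    gaussianReal_map_const_mul, gaussianReal_map_const_add, mul_zero, zero_add, mul_one]
  rfl

section LogNormal

variable {P : Measure Ω} {X : Ω → ℝ} {μ σ : ℝ}

lemma rvCdf_eq_measure_preimage_exp (hX : IsLogNormalRV P X μ σ) (x : ℝ) :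
    rvCdf P X x = (gaussianReal 0 1 {t | Real.exp (μ + σ * t) ≤ x}).toReal := by
  change (P (X ⁻¹' Iic x)).toReal = _
  rw [← Measure.map_apply hX.1 measurableSet_Iic, hX.2,
    gaussianReal_eq_map_const_add_mul, Measure.map_map Real.measurable_exp (by fun_prop),
    Measure.map_apply (by fun_prop) measurableSet_Iic]
  rfl

lemma rvCdf_of_isLogNormalRV (hX : IsLogNormalRV P X μ σ) (hσ : 0 < σ) {x : ℝ} (hx : 0 < x) :
    rvCdf P X x = stdNormCdf ((Real.log x - μ) / σ) := by
  rw [rvCdf_eq_measure_preimage_exp hX, stdNormCdf]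
  congr 2
  ext t
  rw [mem_Iic, le_div_iff₀ hσ]
  change Real.exp _ ≤ x ↔ _
  rw [← Real.le_log_iff_exp_le hx]
  constructor <;> intro h <;> linarith

lemma rvCdf_of_isLogNormalRV_of_nonpos (hX : IsLogNormalRV P X μ σ) {x : ℝ} (hx : x ≤ 0) :
    rvCdf P X x = 0 := by
  rw [rvCdf_eq_measure_preimage_exp hX,
    show {t | Real.exp (μ + σ * t) ≤ x} = ∅ from
      eq_empty_of_forall_notMem fun t ht => (hx.trans_lt (Real.exp_pos _)).not_ge ht,
    measure_empty, ENNReal.toReal_zero]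

lemma rvCdf_lt_one_of_isLogNormalRV (hX : IsLogNormalRV P X μ σ) (hσ : 0 < σ) (x : ℝ) :
    rvCdf P X x < 1 := by
  rcases lt_or_ge 0 x with hx | hx
  · exact rvCdf_of_isLogNormalRV hX hσ hx ▸ (stdNormCdf_mem_Ioo _).2
  · exact rvCdf_of_isLogNormalRV_of_nonpos hX hx ▸ one_pos

lemma leftInv_rvCdf_stdNormCdf (hX : IsLogNormalRV P X μ σ) (hσ : 0 < σ) (t : ℝ) :
    leftInv (rvCdf P X) (stdNormCdf t) = Real.exp (μ + σ * t) := by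
  refine leftInv_eq_of_forall_le_iff fun x => ?_
  rcases lt_or_ge 0 x with hx | hx
  · rw [rvCdf_of_isLogNormalRV hX hσ hx, strictMono_stdNormCdf.le_iff_le, le_div_iff₀ hσ,
      ← Real.le_log_iff_exp_le hx]
    constructor <;> intro h <;> linarith
  · rw [rvCdf_of_isLogNormalRV_of_nonpos hX hx]
    exact iff_of_false (stdNormCdf_mem_Ioo t).1.not_ge (hx.trans_lt (Real.exp_pos _)).not_ge

lemma continuousOn_leftInv_rvCdf (hX : IsLogNormalRV P X μ σ) (hσ : 0 < σ) :
    ContinuousOn (leftInv (rvCdf P X)) (Ioo 0 1) := by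
  have hmono : MonotoneOn (leftInv (rvCdf P X)) (Ioo 0 1) := by
    rw [← range_stdNormCdf]
    rintro _ ⟨s, rfl⟩ _ ⟨t, rfl⟩ hst
    have hst' := strictMono_stdNormCdf.le_iff_le.1 hst
    rw [leftInv_rvCdf_stdNormCdf hX hσ, leftInv_rvCdf_stdNormCdf hX hσ]
    gcongr
  intro u hu
  refine (continuousAt_of_monotoneOn_of_image_mem_nhds hmono (Ioo_mem_nhds hu.1 hu.2) ?_)
    |>.continuousWithinAt
  obtain ⟨s, rfl⟩ := range_stdNormCdf ▸ hu
  rw [leftInv_rvCdf_stdNormCdf hX hσ]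
  refine mem_of_superset (Ioi_mem_nhds (Real.exp_pos _)) fun y (hy : 0 < y) => ?_
  refine ⟨stdNormCdf ((Real.log y - μ) / σ), stdNormCdf_mem_Ioo _, ?_⟩
  rw [leftInv_rvCdf_stdNormCdf hX hσ, mul_div_cancel₀ _ hσ.ne', add_sub_cancel, Real.exp_log hy]

lemma measurable_leftInv_rvCdf (hX : IsLogNormalRV P X μ σ) (hσ : 0 < σ) :
    Measurable (leftInv (rvCdf P X)) := by
  classical
  have hjunk : leftInv (rvCdf P X) = (Ioo 0 1).piecewise (leftInv (rvCdf P X)) 0 := by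
    funext u
    by_cases hu : u ∈ Ioo (0 : ℝ) 1
    · rw [piecewise_eq_of_mem _ _ _ hu]
    rw [piecewise_eq_of_notMem _ _ _ hu, Pi.zero_apply]
    rcases le_or_gt u 0 with h0 | h0
    · exact leftInv_of_nonpos (fun _ => ENNReal.toReal_nonneg) h0
    · exact leftInv_of_one_le (rvCdf_lt_one_of_isLogNormalRV hX hσ) (not_lt.1 (hu ⟨h0, ·⟩))
  rw [hjunk]
  exact (continuousOn_leftInv_rvCdf hX hσ).measurable_piecewise continuousOn_const
    measurableSet_Ioo

end LogNormal

lemma StrictConvexOn.lt_max_of_lt_of_lt {f : ℝ → ℝ} {s : Set ℝ} (hf : StrictConvexOn ℝ s f)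
    {x y z : ℝ} (hx : x ∈ s) (hz : z ∈ s) (hxy : x < y) (hyz : y < z) :
    f y < max (f x) (f z) :=
  hf.lt_on_openSegment hx hz (hxy.trans hyz).ne (openSegment_eq_Ioo (hxy.trans hyz) ▸ ⟨hxy, hyz⟩)

/-- Two roots come from the intermediate value theorem on either side of `c`; a third root would
lie strictly between two others, where strict convexity forces `f < s`. -/
lemma StrictConvexOn.exists_preimage_singleton_eq_pair {f : ℝ → ℝ}
    (hf : StrictConvexOn ℝ univ f) (hcont : Continuous f) (hlim : Tendsto f (cocompact ℝ) atTop)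
    {c s : ℝ} (hs : f c < s) : ∃ a b, a < b ∧ f ⁻¹' {s} = {a, b} := by
  rw [cocompact_eq_atBot_atTop, tendsto_sup] at hlim
  obtain ⟨A, hA, hAc⟩ := ((hlim.1.eventually_ge_atTop s).and (eventually_le_atBot c)).exists
  obtain ⟨B, hB, hcB⟩ := ((hlim.2.eventually_ge_atTop s).and (eventually_ge_atTop c)).exists
  obtain ⟨a, ha, hfa⟩ := intermediate_value_Icc' hAc hcont.continuousOn ⟨hs.le, hA⟩
  obtain ⟨b, hb, hfb⟩ := intermediate_value_Icc hcB hcont.continuousOn ⟨hs.le, hB⟩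
  have hac : a < c := ha.2.lt_of_ne (by rintro rfl; exact hs.ne hfa)
  have hcb : c < b := hb.1.lt_of_ne' (by rintro rfl; exact hs.ne hfb)
  refine ⟨a, b, hac.trans hcb, Subset.antisymm (fun t (ht : f t = s) => ?_) ?_⟩
  · by_contra hne
    simp only [mem_insert_iff, mem_singleton_iff, not_or] at hne
    rcases lt_or_gt_of_ne hne.1 with hta | hat
    · have := hf.lt_max_of_lt_of_lt (mem_univ t) (mem_univ b) hta (hac.trans hcb)
      simp_all
    rcases lt_or_gt_of_ne hne.2 with htb | hbt
    · have := hf.lt_max_of_lt_of_lt (mem_univ a) (mem_univ b) hat htb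
      simp_all
    · have := hf.lt_max_of_lt_of_lt (mem_univ a) (mem_univ t) (hac.trans hcb) hbt
      simp_all
  · rintro _ (rfl | rfl)
    exacts [hfa, hfb]

lemma strictConvexOn_exp_const_add_mul (μ : ℝ) {σ : ℝ} (hσ : σ ≠ 0) :
    StrictConvexOn ℝ univ fun t => Real.exp (μ + σ * t) := by
  refine ⟨convex_univ, fun x _ y _ hxy a b ha hb hab => ?_⟩
  have hne : μ + σ * x ≠ μ + σ * y := by simpa [hσ] using hxy
  convert strictConvexOn_exp.2 (mem_univ _) (mem_univ _) hne ha hb hab using 2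
  simp only [smul_eq_mul]
  linear_combination -μ * hab

def lognormalCmLoss (μ₁ μ₂ σ₁ σ₂ t : ℝ) : ℝ := Real.exp (μ₁ + σ₁ * t) + Real.exp (μ₂ - σ₂ * t)

section LognormalCmLoss

variable {μ₁ μ₂ σ₁ σ₂ : ℝ}

lemma continuous_lognormalCmLoss : Continuous (lognormalCmLoss μ₁ μ₂ σ₁ σ₂) := by
  unfold lognormalCmLoss
  fun_prop

lemma strictConvexOn_lognormalCmLoss (hσ₁ : 0 < σ₁) (hσ₂ : 0 < σ₂) :
    StrictConvexOn ℝ univ (lognormalCmLoss μ₁ μ₂ σ₁ σ₂) := by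
  have h₂ := strictConvexOn_exp_const_add_mul μ₂ (neg_ne_zero.2 hσ₂.ne')
  simp only [neg_mul, ← sub_eq_add_neg] at h₂
  exact (strictConvexOn_exp_const_add_mul μ₁ hσ₁.ne').add h₂

lemma tendsto_lognormalCmLoss_cocompact (hσ₁ : 0 < σ₁) (hσ₂ : 0 < σ₂) :
    Tendsto (lognormalCmLoss μ₁ μ₂ σ₁ σ₂) (cocompact ℝ) atTop := by
  rw [cocompact_eq_atBot_atTop, tendsto_sup]
  constructor
  · refine tendsto_atTop_mono (fun t => le_add_of_nonneg_left (Real.exp_pos _).le)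
      (Real.tendsto_exp_atTop.comp ?_)
    simpa [sub_eq_add_neg] using
      tendsto_atTop_add_const_left _ μ₂ (tendsto_neg_atBot_atTop.const_mul_atTop hσ₂)
  · exact tendsto_atTop_mono (fun t => le_add_of_nonneg_right (Real.exp_pos _).le)
      (Real.tendsto_exp_atTop.comp
        (tendsto_atTop_add_const_left _ μ₁ (tendsto_id.const_mul_atTop hσ₁)))

end LognormalCmLoss

/-- The aggregate loss function `φ⁻`; `cmSum P X₁ X₂ U ω` unfolds to `cmLoss P X₁ X₂ (U ω)`. -/
def cmLoss (P : Measure Ω) (X₁ X₂ : Ω → ℝ) (u : ℝ) : ℝ :=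
  leftInv (rvCdf P X₁) u + leftInv (rvCdf P X₂) (1 - u)

section CmLoss

variable {P : Measure Ω} {X₁ X₂ : Ω → ℝ} {μ₁ μ₂ σ₁ σ₂ : ℝ}

lemma cmLoss_stdNormCdf (h₁ : IsLogNormalRV P X₁ μ₁ σ₁) (h₂ : IsLogNormalRV P X₂ μ₂ σ₂)
    (hσ₁ : 0 < σ₁) (hσ₂ : 0 < σ₂) (t : ℝ) :
    cmLoss P X₁ X₂ (stdNormCdf t) = lognormalCmLoss μ₁ μ₂ σ₁ σ₂ t := by
  rw [cmLoss, ← stdNormCdf_neg, leftInv_rvCdf_stdNormCdf h₁ hσ₁, leftInv_rvCdf_stdNormCdf h₂ hσ₂,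
    lognormalCmLoss, mul_neg, ← sub_eq_add_neg]

lemma measurable_cmLoss (h₁ : IsLogNormalRV P X₁ μ₁ σ₁) (h₂ : IsLogNormalRV P X₂ μ₂ σ₂)
    (hσ₁ : 0 < σ₁) (hσ₂ : 0 < σ₂) :
    Measurable (cmLoss P X₁ X₂) :=
  (measurable_leftInv_rvCdf h₁ hσ₁).add
    ((measurable_leftInv_rvCdf h₂ hσ₂).comp (measurable_const.sub measurable_id))

lemma sep_cmLoss_eq_image_preimage (h₁ : IsLogNormalRV P X₁ μ₁ σ₁) (h₂ : IsLogNormalRV P X₂ μ₂ σ₂)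
    (hσ₁ : 0 < σ₁) (hσ₂ : 0 < σ₂) (s : ℝ) :
    {u ∈ Ioo 0 1 | cmLoss P X₁ X₂ u = s} = stdNormCdf '' (lognormalCmLoss μ₁ μ₂ σ₁ σ₂ ⁻¹' {s}) := by
  rw [← range_stdNormCdf]
  ext u
  constructor
  · rintro ⟨⟨t, rfl⟩, hu⟩
    exact ⟨t, (cmLoss_stdNormCdf h₁ h₂ hσ₁ hσ₂ t).symm.trans hu, rfl⟩
  · rintro ⟨t, ht, rfl⟩
    exact ⟨⟨t, rfl⟩, (cmLoss_stdNormCdf h₁ h₂ hσ₁ hσ₂ t).trans ht⟩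

/-- On `(0, 1)` the aggregate loss reaches its minimum only at `Φ c`, and `U` lies in `(0, 1)`
almost surely. -/
lemma rvCdf_cmSum_eq_zero (h₁ : IsLogNormalRV P X₁ μ₁ σ₁) (h₂ : IsLogNormalRV P X₂ μ₂ σ₂)
    (hσ₁ : 0 < σ₁) (hσ₂ : 0 < σ₂) {U : Ω → ℝ} (hU : IsUniform01 P U) {c : ℝ}
    (hc : ∀ t, lognormalCmLoss μ₁ μ₂ σ₁ σ₂ c ≤ lognormalCmLoss μ₁ μ₂ σ₁ σ₂ t) :
    rvCdf P (cmSum P X₁ X₂ U) (lognormalCmLoss μ₁ μ₂ σ₁ σ₂ c) = 0 := by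
  have hsub : {ω | cmSum P X₁ X₂ U ω ≤ lognormalCmLoss μ₁ μ₂ σ₁ σ₂ c} ⊆
      U ⁻¹' ((Ioo 0 1)ᶜ ∪ {stdNormCdf c}) := by
    intro ω (hω : cmLoss P X₁ X₂ (U ω) ≤ _)
    by_cases hu : U ω ∈ Ioo 0 1
    · obtain ⟨t, ht⟩ := range_stdNormCdf ▸ hu
      rw [← ht, cmLoss_stdNormCdf h₁ h₂ hσ₁ hσ₂] at hω
      rw [mem_preimage, ← ht, (strictConvexOn_lognormalCmLoss hσ₁ hσ₂).eq_of_isMinOn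
        (isMinOn_univ_iff.2 fun s => hω.trans (hc s)) (isMinOn_univ_iff.2 hc) (mem_univ t)
        (mem_univ c)]
      exact Or.inr rfl
    · exact Or.inl hu
  have hnull : P (U ⁻¹' ((Ioo 0 1)ᶜ ∪ {stdNormCdf c})) = 0 := by
    rw [← Measure.map_apply hU.1 (measurableSet_Ioo.compl.union (measurableSet_singleton _)), hU.2,
      Measure.restrict_congr_set Ioo_ae_eq_Icc.symm, Measure.restrict_apply
        (measurableSet_Ioo.compl.union (measurableSet_singleton _)), union_inter_distrib_right,
      compl_inter_self, empty_union]
    exact measure_mono_null inter_subset_left (measure_singleton _)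
  rw [rvCdf, measure_mono_null hsub hnull, ENNReal.toReal_zero]

end CmLoss

theorem lognormal_nonid_cm_sum_VaR_general
    (P : Measure Ω) [IsProbabilityMeasure P]
    (X₁ X₂ U : Ω → ℝ) (μ₁ μ₂ σ₁ σ₂ : ℝ) (hσ₁ : 0 < σ₁) (hσ₂ : 0 < σ₂)
    (h₁ : IsLogNormalRV P X₁ μ₁ σ₁) (h₂ : IsLogNormalRV P X₂ μ₂ σ₂)
    (hU : IsUniform01 P U)
    (φ : ℝ → ℝ)
    (hφ : ∀ u, φ u = leftInv (rvCdf P X₁) u + leftInv (rvCdf P X₂) (1 - u))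
    (p : ℝ) (hp : p ∈ Ioo (0:ℝ) 1) :
    ∃ u₁ u₂ : ℝ, u₁ < u₂ ∧
      {u ∈ Ioo (0:ℝ) 1 | φ u = leftInv (rvCdf P (cmSum P X₁ X₂ U)) p} = {u₁, u₂} ∧
      VaR P (cmSum P X₁ X₂ U) p = VaR P X₁ u₁ + VaR P X₂ (1 - u₁) ∧
      VaR P (cmSum P X₁ X₂ U) p = VaR P X₁ u₂ + VaR P X₂ (1 - u₂) := by
  obtain rfl : φ = cmLoss P X₁ X₂ := funext hφ
  obtain ⟨c, hc⟩ := continuous_lognormalCmLoss.exists_forall_le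
    (tendsto_lognormalCmLoss_cocompact (μ₁ := μ₁) (μ₂ := μ₂) hσ₁ hσ₂)
  have hmin : lognormalCmLoss μ₁ μ₂ σ₁ σ₂ c < VaR P (cmSum P X₁ X₂ U) p :=
    lt_leftInv_rvCdf_of_rvCdf_eq_zero ((measurable_cmLoss h₁ h₂ hσ₁ hσ₂).comp hU.1)
      (rvCdf_cmSum_eq_zero h₁ h₂ hσ₁ hσ₂ hU hc) hp
  obtain ⟨a, b, hab, hroots⟩ :=
    (strictConvexOn_lognormalCmLoss hσ₁ hσ₂).exists_preimage_singleton_eq_pair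
      continuous_lognormalCmLoss (tendsto_lognormalCmLoss_cocompact hσ₁ hσ₂) hmin
  have hE := sep_cmLoss_eq_image_preimage h₁ h₂ hσ₁ hσ₂ (VaR P (cmSum P X₁ X₂ U) p)
  rw [hroots, image_pair] at hE
  have hVaR : ∀ u ∈ ({stdNormCdf a, stdNormCdf b} : Set ℝ),
      VaR P (cmSum P X₁ X₂ U) p = VaR P X₁ u + VaR P X₂ (1 - u) :=
    fun u hu => (hE.symm ▸ hu : u ∈ {u ∈ Ioo 0 1 | cmLoss P X₁ X₂ u = _}).2.symm
  exact ⟨_, _, strictMono_stdNormCdf hab, hE, hVaR _ (Or.inl rfl), hVaR _ (Or.inr rfl)⟩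

/-- VaR of the counter-monotonic sum of two non-identically distributed
log-normal risks: the level set of the aggregate loss function at the quantile has exactly
two elements and each yields a decomposition of the VaR. -/
theorem lognormal_nonid_cm_sum_VaR
    (P : Measure Ω) [IsProbabilityMeasure P]
    (X₁ X₂ U : Ω → ℝ) (μ₁ μ₂ σ₁ σ₂ : ℝ) (hσ₁ : 0 < σ₁) (hσ₂ : 0 < σ₂)
    (h₁ : IsLogNormalRV P X₁ μ₁ σ₁) (h₂ : IsLogNormalRV P X₂ μ₂ σ₂)
    (hne : (μ₁, σ₁) ≠ (μ₂, σ₂))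
    (hU : IsUniform01 P U)
    (φ : ℝ → ℝ)
    (hφ : ∀ u, φ u = leftInv (rvCdf P X₁) u + leftInv (rvCdf P X₂) (1 - u))
    (p : ℝ) (hp : p ∈ Ioo (0:ℝ) 1) :
    ∃ u₁ u₂ : ℝ, u₁ < u₂ ∧
      {u ∈ Ioo (0:ℝ) 1 | φ u = leftInv (rvCdf P (cmSum P X₁ X₂ U)) p} = {u₁, u₂} ∧
      VaR P (cmSum P X₁ X₂ U) p = VaR P X₁ u₁ + VaR P X₂ (1 - u₁) ∧
      VaR P (cmSum P X₁ X₂ U) p = VaR P X₁ u₂ + VaR P X₂ (1 - u₂) :=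
  lognormal_nonid_cm_sum_VaR_general P X₁ X₂ U μ₁ μ₂ σ₁ σ₂ hσ₁ hσ₂ h₁ h₂ hU φ hφ p hp

end
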